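/- arXiv:2406.07776 — 5 statements merged into one kernel-verified Lean document; each statement's English description precedes it below -/
import Mathlib

section
/- Let G : ℂⁿ → ℝ be continuous, positive, convex, and complex homogeneous, and assume G is continuously differentiable on ℂⁿ∖{0} (as a function of the underlying real variables ℂⁿ ≅ ℝ^{2n}). Then the dual norm F(ξ) = sup{Re(η(ξ)) : η ∈ ℂⁿ, G(η) = 1} is strictly convex; that is, F(ξ₁ + ξ₂) < 2 whenever F(ξ₁) = F(ξ₂) = 1 and ξ₁ ≠ ξ₂. -/
open Complex Filter Asymptotics Topology

noncomputable section

/-- The ℂ-bilinear pairing `η(ξ) = ∑ i, η i * ξ i` on `ℂⁿ`. -/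
def cpair {n : ℕ} (η ξ : Fin n → ℂ) : ℂ := ∑ i, η i * ξ i

/-- `G` is positive: `G η > 0` for every `η ≠ 0`. -/
def IsPositiveFn {n : ℕ} (G : (Fin n → ℂ) → ℝ) : Prop :=
  ∀ η : Fin n → ℂ, η ≠ 0 → 0 < G η

/-- `G` is complex homogeneous: `G (α • η) = |α| * G η`. -/
def IsComplexHomogeneous {n : ℕ} (G : (Fin n → ℂ) → ℝ) : Prop :=
  ∀ (α : ℂ) (η : Fin n → ℂ), G (α • η) = ‖α‖ * G η

/-- `G` is convex (subadditive): `G (η₁ + η₂) ≤ G η₁ + G η₂`. -/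
def IsConvexFn {n : ℕ} (G : (Fin n → ℂ) → ℝ) : Prop :=
  ∀ η₁ η₂ : Fin n → ℂ, G (η₁ + η₂) ≤ G η₁ + G η₂

/-- `G` is strictly convex: it is convex and `G (η₁ + η₂) < 2` whenever
`G η₁ = G η₂ = 1` and `η₁ ≠ η₂`. -/
def IsStrictlyConvexFn {n : ℕ} (G : (Fin n → ℂ) → ℝ) : Prop :=
  IsConvexFn G ∧
    ∀ η₁ η₂ : Fin n → ℂ, G η₁ = 1 → G η₂ = 1 → η₁ ≠ η₂ → G (η₁ + η₂) < 2

/-- The dual norm `F ξ = sup {Re (η(ξ)) : G η = 1}`. -/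
def dualNorm {n : ℕ} (G : (Fin n → ℂ) → ℝ) (ξ : Fin n → ℂ) : ℝ :=
  sSup {r : ℝ | ∃ η : Fin n → ℂ, G η = 1 ∧ r = (cpair η ξ).re}

/-- The dual metric `F (x, ξ) = sup {Re (η(ξ)) : G (x, η) = 1}` of a parametrized
family `G : U × ℂⁿ → ℝ`. -/
def dualMetric {m n : ℕ} (G : (Fin m → ℂ) × (Fin n → ℂ) → ℝ)
    (x : Fin m → ℂ) (ξ : Fin n → ℂ) : ℝ :=
  dualNorm (fun η => G (x, η)) ξ


/-! The dual norm `F` is the supremum of the real-linear functionals `Re (η(·))` over the compact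
level set `G = 1`, hence convex. If `F ξ₁ = F ξ₂ = 1` but `F (ξ₁ + ξ₂) = 2`, a maximiser `η` for
`ξ₁ + ξ₂` maximises for `ξ₁` and for `ξ₂` as well. Then `G - Re (·(ξᵢ))` is nonnegative and
vanishes at `η ≠ 0`, so differentiability of `G` at `η` gives `Re (·(ξ₁)) = dG_η = Re (·(ξ₂))`,
whence `ξ₁ = ξ₂`. -/

def reCpairCLM {n : ℕ} (ξ : Fin n → ℂ) : (Fin n → ℂ) →L[ℝ] ℝ :=
  LinearMap.toContinuousLinearMap
    { toFun := fun η => (cpair η ξ).re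
      map_add' := fun a b => by simp [cpair, add_mul, Finset.sum_add_distrib]
      map_smul' := fun t a => by
        simp only [cpair, RingHom.id_apply, smul_eq_mul, ← re_ofReal_mul, Finset.mul_sum]
        simp [mul_assoc] }

@[simp]
lemma reCpairCLM_apply {n : ℕ} (ξ η : Fin n → ℂ) : reCpairCLM ξ η = (cpair η ξ).re := rfl

lemma reCpairCLM_add {n : ℕ} (ξ₁ ξ₂ : Fin n → ℂ) :
    reCpairCLM (ξ₁ + ξ₂) = reCpairCLM ξ₁ + reCpairCLM ξ₂ := by
  ext η
  simp [cpair, mul_add, Finset.sum_add_distrib]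

lemma cpair_single {n : ℕ} (i : Fin n) (c : ℂ) (ξ : Fin n → ℂ) :
    cpair (Pi.single i c) ξ = c * ξ i := by
  simp [cpair, Pi.single_apply, ite_mul]

lemma reCpairCLM_injective {n : ℕ} : Function.Injective (reCpairCLM (n := n)) := by
  intro ξ₁ ξ₂ h
  funext i
  have hre := congrArg (fun ℓ => ℓ (Pi.single i 1)) h
  have him := congrArg (fun ℓ => ℓ (Pi.single i (-I))) h
  simp only [reCpairCLM_apply, cpair_single] at hre him
  exact Complex.ext (by simpa using hre) (by simpa using him)

theorem HasFDerivAt.eq_of_eventually_le_of_eq {E : Type*} [NormedAddCommGroup E]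
    [NormedSpace ℝ E] {G : E → ℝ} {G' ℓ : E →L[ℝ] ℝ} {η : E} (hG : HasFDerivAt G G' η)
    (hle : ∀ᶠ v in 𝓝 η, ℓ v ≤ G v) (heq : G η = ℓ η) : G' = ℓ := by
  have hmin : IsLocalMin (fun v => G v - ℓ v) η :=
    hle.mono fun v hv => by simp only [heq, sub_self]; linarith
  exact sub_eq_zero.mp (hmin.hasFDerivAt_eq_zero (hG.sub ℓ.hasFDerivAt))

section Homogeneous

variable {n : ℕ} {G : (Fin n → ℂ) → ℝ}

lemma IsComplexHomogeneous.map_zero (hG : IsComplexHomogeneous G) : G 0 = 0 := by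
  simpa using hG 0 0

lemma IsComplexHomogeneous.map_neg (hG : IsComplexHomogeneous G) (η : Fin n → ℂ) :
    G (-η) = G η := by
  simpa using hG (-1) η

lemma IsComplexHomogeneous.map_real_smul (hG : IsComplexHomogeneous G) {t : ℝ} (ht : 0 ≤ t)
    (η : Fin n → ℂ) : G (t • η) = t * G η := by
  simpa [Complex.coe_smul, abs_of_nonneg ht] using hG t η

lemma setOf_eq_one_eq_image_sphere (hGpos : IsPositiveFn G) (hGhom : IsComplexHomogeneous G) :
    {η | G η = 1} = (fun u => (G u)⁻¹ • u) '' Metric.sphere 0 1 := by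
  ext η
  constructor
  · intro (hη : G η = 1)
    have hη0 : η ≠ 0 := by rintro rfl; simp [hGhom.map_zero] at hη
    have hnorm : 0 < ‖η‖ := norm_pos_iff.mpr hη0
    refine ⟨‖η‖⁻¹ • η, by simp [norm_smul, hnorm.ne'], ?_⟩
    dsimp only
    rw [hGhom.map_real_smul (inv_nonneg.mpr hnorm.le), hη, mul_one, inv_inv, smul_smul,
      mul_inv_cancel₀ hnorm.ne', one_smul]
  · rintro ⟨u, hu, rfl⟩
    have hGu : 0 < G u := hGpos u (ne_zero_of_mem_sphere one_ne_zero ⟨u, hu⟩)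
    show G _ = 1
    rw [hGhom.map_real_smul (inv_nonneg.mpr hGu.le), inv_mul_cancel₀ hGu.ne']

lemma isCompact_setOf_eq_one (hGcont : Continuous G) (hGpos : IsPositiveFn G)
    (hGhom : IsComplexHomogeneous G) : IsCompact {η | G η = 1} := by
  rw [setOf_eq_one_eq_image_sphere hGpos hGhom]
  refine (isCompact_sphere 0 1).image_of_continuousOn ?_
  refine (hGcont.continuousOn.inv₀ fun u hu => ?_).smul continuousOn_id
  exact (hGpos u (ne_zero_of_mem_sphere one_ne_zero ⟨u, hu⟩)).ne'

end Homogeneous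

section DualNorm

variable {n : ℕ} {G : (Fin n → ℂ) → ℝ}

lemma dualNorm_eq_sSup_image (ξ : Fin n → ℂ) :
    dualNorm G ξ = sSup (reCpairCLM ξ '' {η | G η = 1}) := by
  simp only [dualNorm, Set.image, Set.mem_ofPred_eq, reCpairCLM_apply, eq_comm]

variable (hK : IsCompact {η | G η = 1})
include hK

lemma reCpairCLM_le_dualNorm (ξ : Fin n → ℂ) {η : Fin n → ℂ} (hη : G η = 1) :
    reCpairCLM ξ η ≤ dualNorm G ξ := by
  rw [dualNorm_eq_sSup_image]
  exact le_csSup ((hK.image (reCpairCLM ξ).continuous).bddAbove) ⟨η, hη, rfl⟩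

lemma exists_reCpairCLM_eq_dualNorm {ξ : Fin n → ℂ} (hξ : dualNorm G ξ ≠ 0) :
    ∃ η, G η = 1 ∧ reCpairCLM ξ η = dualNorm G ξ := by
  rw [dualNorm_eq_sSup_image] at hξ ⊢
  have hne : (reCpairCLM ξ '' {η | G η = 1}).Nonempty :=
    Set.nonempty_iff_ne_empty.mpr fun h => hξ (by rw [h, Real.sSup_empty])
  exact (hK.image (reCpairCLM ξ).continuous).sSup_mem hne

lemma dualNorm_nonneg (hGhom : IsComplexHomogeneous G) (ξ : Fin n → ℂ) : 0 ≤ dualNorm G ξ := by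
  rcases Set.eq_empty_or_nonempty {η | G η = 1} with hempty | ⟨η, hη⟩
  · rw [dualNorm_eq_sSup_image, hempty, Set.image_empty, Real.sSup_empty]
  · have hneg : G (-η) = 1 := (hGhom.map_neg η).trans hη
    have h₁ := reCpairCLM_le_dualNorm hK ξ hη
    have h₂ := reCpairCLM_le_dualNorm hK ξ hneg
    rw [map_neg] at h₂
    linarith

lemma isConvexFn_dualNorm (hGhom : IsComplexHomogeneous G) : IsConvexFn (dualNorm G) := by
  intro ξ₁ ξ₂
  rw [dualNorm_eq_sSup_image]
  refine Real.sSup_le ?_ (add_nonneg (dualNorm_nonneg hK hGhom _) (dualNorm_nonneg hK hGhom _))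
  rintro _ ⟨η, hη, rfl⟩
  have h₁ := reCpairCLM_le_dualNorm hK ξ₁ hη
  have h₂ := reCpairCLM_le_dualNorm hK ξ₂ hη
  rw [reCpairCLM_add, add_apply]
  linarith

lemma reCpairCLM_le_dualNorm_mul (hGpos : IsPositiveFn G) (hGhom : IsComplexHomogeneous G)
    (ξ v : Fin n → ℂ) : reCpairCLM ξ v ≤ dualNorm G ξ * G v := by
  rcases eq_or_ne v 0 with rfl | hv
  · simp [cpair, hGhom.map_zero]
  have hGv : 0 < G v := hGpos v hv
  have hle := reCpairCLM_le_dualNorm hK ξ (η := (G v)⁻¹ • v)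
    (by rw [hGhom.map_real_smul (inv_nonneg.mpr hGv.le), inv_mul_cancel₀ hGv.ne'])
  rw [map_smul, smul_eq_mul, inv_mul_le_iff₀ hGv] at hle
  linarith

end DualNorm

theorem royden_dual_norm_strictly_convex_general {n : ℕ} (G : (Fin n → ℂ) → ℝ)
    (hGcont : Continuous G) (hGpos : IsPositiveFn G)
    (hGhom : IsComplexHomogeneous G)
    (hGC1 : ContDiffOn ℝ 1 G {η : Fin n → ℂ | η ≠ 0}) :
    IsStrictlyConvexFn (dualNorm G) := by
  have hK := isCompact_setOf_eq_one hGcont hGpos hGhom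
  refine ⟨isConvexFn_dualNorm hK hGhom, fun ξ₁ ξ₂ h₁ h₂ hne => ?_⟩
  by_contra! h
  obtain ⟨η, hη, hmax⟩ := exists_reCpairCLM_eq_dualNorm hK (ξ := ξ₁ + ξ₂) (by linarith)
  have hle₁ := h₁ ▸ reCpairCLM_le_dualNorm hK ξ₁ hη
  have hle₂ := h₂ ▸ reCpairCLM_le_dualNorm hK ξ₂ hη
  rw [reCpairCLM_add, add_apply] at hmax
  have hη0 : η ≠ 0 := by rintro rfl; simp [hGhom.map_zero] at hη
  have hG' : HasFDerivAt G (fderiv ℝ G η) η :=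
    ((hGC1.differentiableOn one_ne_zero).differentiableAt (isOpen_ne.mem_nhds hη0)).hasFDerivAt
  have hderiv {ξ : Fin n → ℂ} (hξ : dualNorm G ξ = 1) (hηξ : reCpairCLM ξ η = 1) :
      fderiv ℝ G η = reCpairCLM ξ :=
    hG'.eq_of_eventually_le_of_eq (.of_forall fun v => by
      simpa [hξ] using reCpairCLM_le_dualNorm_mul hK hGpos hGhom ξ v) (hη.trans hηξ.symm)
  exact hne (reCpairCLM_injective ((hderiv h₁ (by linarith)).symm.trans (hderiv h₂ (by linarith))))

/-- **Royden's criterion, first bullet (Claim 1).** If `G : ℂⁿ → ℝ` is continuous, positive,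
convex and complex homogeneous, and `G` is continuously differentiable (over ℝ) on
`ℂⁿ ∖ {0}`, then the dual norm `F ξ = sup {Re (η(ξ)) : G η = 1}` is strictly convex. -/
theorem royden_dual_norm_strictly_convex {n : ℕ} (G : (Fin n → ℂ) → ℝ)
    (hGcont : Continuous G) (hGpos : IsPositiveFn G) (hGconv : IsConvexFn G)
    (hGhom : IsComplexHomogeneous G)
    (hGC1 : ContDiffOn ℝ 1 G {η : Fin n → ℂ | η ≠ 0}) :
    IsStrictlyConvexFn (dualNorm G) :=
  royden_dual_norm_strictly_convex_general G hGcont hGpos hGhom hGC1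
end
end

section
/- Let U ⊆ ℂ be a nonempty connected open set and let q₁, q₂ : U → ℂ be holomorphic functions with ∫_U |q₁| dA = ∫_U |q₂| dA = 1 (dA the Lebesgue area measure on ℂ) and q₁ ≠ q₂. Then ∫_U |q₁ + q₂| dA < 2. -/
/-!
Pointwise `‖q₁ + q₂‖ ≤ ‖q₁‖ + ‖q₂‖`, and the integrated inequality is strict as soon as the
pointwise one is strict at a single point, by continuity. If it is nowhere strict, then `q₂(z)`
lies on the ray through `q₁(z)` for every `z`, so near a zero-free point of `q₁` the
holomorphic quotient `q₂ / q₁` is real-valued, hence constant by the open mapping theorem.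
The identity theorem then gives `q₂ = r q₁` on `U` with `r ≥ 0`, and the normalisation forces
`r = 1`.
-/

open MeasureTheory Complex Filter Topology Set

section Integral

variable {X E : Type*} [TopologicalSpace X] [MeasurableSpace X] [OpensMeasurableSpace X]
  {μ : Measure X} [μ.IsOpenPosMeasure] {U : Set X} {x : X}

theorem IsOpen.setIntegral_pos_of_continuousOn {f : X → ℝ} (hU : IsOpen U)
    (hf : ContinuousOn f U) (hfi : IntegrableOn f U μ) (hf0 : ∀ y ∈ U, 0 ≤ f y) (hx : x ∈ U)
    (hfx : 0 < f x) : 0 < ∫ y in U, f y ∂μ := by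
  have hUx : U ∈ 𝓝 x := hU.mem_nhds hx
  refine (setIntegral_pos_iff_support_of_nonneg_ae
    (ae_restrict_of_forall_mem hU.measurableSet hf0) hfi).2 (μ.measure_pos_of_mem_nhds (x := x) ?_)
  exact inter_mem ((hf.continuousAt hUx).eventually_ne hfx.ne') hUx

theorem IsOpen.setIntegral_norm_add_lt [NormedAddCommGroup E] {f g : X → E} (hU : IsOpen U)
    (hf : ContinuousOn f U) (hg : ContinuousOn g U) (hfi : IntegrableOn (‖f ·‖) U μ)
    (hgi : IntegrableOn (‖g ·‖) U μ) (hx : x ∈ U) (hfgx : ‖f x + g x‖ < ‖f x‖ + ‖g x‖) :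
    ∫ y in U, ‖f y + g y‖ ∂μ < (∫ y in U, ‖f y‖ ∂μ) + ∫ y in U, ‖g y‖ ∂μ := by
  have hsum : IntegrableOn (fun y => ‖f y‖ + ‖g y‖) U μ := hfi.add hgi
  have hfgi : IntegrableOn (fun y => ‖f y + g y‖) U μ :=
    hsum.mono' ((hf.add hg).norm.aestronglyMeasurable hU.measurableSet)
      (ae_of_all _ fun y => by simpa using norm_add_le (f y) (g y))
  have hgap : 0 < ∫ y in U, (‖f y‖ + ‖g y‖ - ‖f y + g y‖) ∂μ :=
    hU.setIntegral_pos_of_continuousOn ((hf.norm.add hg.norm).sub (hf.add hg).norm)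
      (hsum.sub hfgi) (fun y _ => sub_nonneg.2 (norm_add_le (f y) (g y))) hx
      (sub_pos.2 hfgx)
  rw [integral_sub hsum hfgi, integral_add hfi hgi] at hgap
  linarith

end Integral

theorem AnalyticAt.eventually_eq_of_eventually_im_eq_zero {g : ℂ → ℂ} {z₀ : ℂ}
    (hg : AnalyticAt ℂ g z₀) (him : ∀ᶠ z in 𝓝 z₀, (g z).im = 0) : ∀ᶠ z in 𝓝 z₀, g z = g z₀ := by
  refine hg.eventually_constant_or_nhds_le_map_nhds.resolve_right fun hopen => ?_
  have hreal : im ⁻¹' {0} ∈ 𝓝 (g z₀) := hopen him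
  simpa [interior_preimage_im, interior_singleton] using interior_mem_nhds.2 hreal

theorem SameRay.exists_nonneg_div_eq_ofReal {a b : ℂ} (h : SameRay ℝ a b) (ha : a ≠ 0) :
    ∃ r : ℝ, 0 ≤ r ∧ b / a = r := by
  obtain ⟨r, hr, rfl⟩ := h.exists_nonneg_left ha
  exact ⟨r, hr, by rw [real_smul, mul_div_assoc, div_self ha, mul_one]⟩

theorem AnalyticOnNhd.exists_nonneg_eqOn_mul_of_sameRay {U : Set ℂ} {f g : ℂ → ℂ}
    (hf : AnalyticOnNhd ℂ f U) (hg : AnalyticOnNhd ℂ g U) (hUo : IsOpen U) (hUc : IsPreconnected U)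
    (hray : ∀ z ∈ U, SameRay ℝ (f z) (g z)) {z₁ : ℂ} (hz₁ : z₁ ∈ U) (hfz₁ : f z₁ ≠ 0) :
    ∃ r : ℝ, 0 ≤ r ∧ EqOn g (fun z => r * f z) U := by
  obtain ⟨r, hr, hr₁⟩ := (hray z₁ hz₁).exists_nonneg_div_eq_ofReal hfz₁
  have hUz₁ : U ∈ 𝓝 z₁ := hUo.mem_nhds hz₁
  have hfne : ∀ᶠ z in 𝓝 z₁, f z ≠ 0 := (hf z₁ hz₁).continuousAt.eventually_ne hfz₁
  have hratio : AnalyticAt ℂ (fun z => g z / f z) z₁ := (hg z₁ hz₁).div (hf z₁ hz₁) hfz₁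
  have hreal : ∀ᶠ z in 𝓝 z₁, (g z / f z).im = 0 := by
    filter_upwards [hUz₁, hfne] with z hz hfz
    obtain ⟨s, -, hs⟩ := (hray z hz).exists_nonneg_div_eq_ofReal hfz
    simp [hs]
  have hloc : g =ᶠ[𝓝 z₁] fun z => r * f z := by
    filter_upwards [hratio.eventually_eq_of_eventually_im_eq_zero hreal, hfne] with z hz hfz
    rwa [hr₁, div_eq_iff hfz] at hz
  exact ⟨r, hr, hg.eqOn_of_preconnected_of_eventuallyEq (analyticOnNhd_const.mul hf) hUc hz₁ hloc⟩

theorem strict_convexity_L1_holomorphic_general (U : Set ℂ) (hU : IsOpen U)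
    (hconn : IsPreconnected U) (q₁ q₂ : ℂ → ℂ)
    (h₁ : DifferentiableOn ℂ q₁ U) (h₂ : DifferentiableOn ℂ q₂ U)
    (hn₁ : ∫ z in U, ‖q₁ z‖ = 1)
    (hn₂ : ∫ z in U, ‖q₂ z‖ = 1)
    (hq : ¬ Set.EqOn q₁ q₂ U) :
    ∫ z in U, ‖q₁ z + q₂ z‖ < 2 := by
  have hi₁ : IntegrableOn (fun z => ‖q₁ z‖) U := .of_integral_ne_zero (by simp [hn₁])
  have hi₂ : IntegrableOn (fun z => ‖q₂ z‖) U := .of_integral_ne_zero (by simp [hn₂])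
  obtain ⟨z₀, hz₀, hlt⟩ : ∃ z ∈ U, ‖q₁ z + q₂ z‖ < ‖q₁ z‖ + ‖q₂ z‖ := by
    by_contra! heq
    have hray : ∀ z ∈ U, SameRay ℝ (q₁ z) (q₂ z) := fun z hz =>
      sameRay_iff_norm_add.2 ((norm_add_le _ _).antisymm (heq z hz))
    obtain ⟨z₁, hz₁, hq₁z₁⟩ : ∃ z ∈ U, q₁ z ≠ 0 := by
      by_contra! h
      rw [setIntegral_congr_fun hU.measurableSet (g := fun _ => 0) fun z hz => by simp [h z hz]]
        at hn₁
      simp at hn₁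
    obtain ⟨r, hr, hq₂⟩ := (h₁.analyticOnNhd hU).exists_nonneg_eqOn_mul_of_sameRay
      (h₂.analyticOnNhd hU) hU hconn hray hz₁ hq₁z₁
    have hr₁ : r = 1 := by
      have : ∫ z in U, ‖q₂ z‖ = ∫ z in U, r * ‖q₁ z‖ :=
        setIntegral_congr_fun hU.measurableSet fun z hz => by simp [hq₂ hz, abs_of_nonneg hr]
      rwa [integral_const_mul, hn₁, hn₂, mul_one, eq_comm] at this
    exact hq fun z hz => by simp [hq₂ hz, hr₁]
  have hint := hU.setIntegral_norm_add_lt h₁.continuousOn h₂.continuousOn hi₁ hi₂ hz₀ hlt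
  rw [hn₁, hn₂] at hint
  linarith

/-- **Strict convexity of the L¹-norm on holomorphic quadratic differentials** (in a
coordinate chart).  If `U ⊆ ℂ` is a nonempty connected open set and `q₁, q₂` are
holomorphic on `U` with `∫_U |q₁| dA = ∫_U |q₂| dA = 1` and `q₁ ≠ q₂` on `U`, then
`∫_U |q₁ + q₂| dA < 2`. -/
theorem strict_convexity_L1_holomorphic (U : Set ℂ) (hU : IsOpen U)
    (hne : U.Nonempty) (hconn : IsPreconnected U) (q₁ q₂ : ℂ → ℂ)
    (h₁ : DifferentiableOn ℂ q₁ U) (h₂ : DifferentiableOn ℂ q₂ U)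
    (hn₁ : ∫ z in U, ‖q₁ z‖ = 1)
    (hn₂ : ∫ z in U, ‖q₂ z‖ = 1)
    (hq : ¬ Set.EqOn q₁ q₂ U) :
    ∫ z in U, ‖q₁ z + q₂ z‖ < 2 :=
  strict_convexity_L1_holomorphic_general U hU hconn q₁ q₂ h₁ h₂ hn₁ hn₂ hq
end

section
/- Let U ⊆ ℂ be a nonempty connected open set and let α, β : U → ℂ be holomorphic with α not identically zero and ∫_U |β| dA = 1 (dA the Lebesgue area measure; note |conj(α)/|α| · β| = |β|, so the integrand below is defined off the measure-zero zero set of α and is integrable). If Re ∫_U (conj(α(z))/|α(z)|)·β(z) dA(z) = 1, then there exists a real number t ≠ 0 such that α = t·β on U. -/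
/-!
Since `‖conj α / |α| · β‖ ≤ |β|`, the hypotheses force `Re (conj α / |α| · β) ≤ |β|` to be an
equality of integrals, hence `conj α / |α| · β = |β|` almost everywhere. So `conj α · β` is real
a.e. on `U`, and by continuity everywhere on `U`. Near a point where `α ≠ 0` the quotient `β / α`
is then a real-valued holomorphic function, which is constant by the open mapping theorem, and
the identity theorem propagates `β = c α` to all of `U`; `c ≠ 0` because `∫ |β| = 1`.
-/

open MeasureTheory Complex ComplexConjugate

namespace Complex

theorem eq_ofReal_of_norm_le_of_le_re {z : ℂ} {r : ℝ} (hnorm : ‖z‖ ≤ r) (hre : r ≤ z.re) :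
    z = r := by
  have hz : z.re = ‖z‖ := le_antisymm (re_le_norm z) (hnorm.trans hre)
  rw [eq_coe_norm_of_nonneg (re_eq_norm.1 hz), ← hz, le_antisymm (hz ▸ hnorm) hre]

theorem im_div_eq_zero_iff {a b : ℂ} (ha : a ≠ 0) : (b / a).im = 0 ↔ (conj a * b).im = 0 := by
  rw [div_eq_mul_inv, inv_def, mul_left_comm, ← mul_assoc, im_mul_ofReal]
  simp [ha]

theorem norm_conj_div_norm_mul_le (a b : ℂ) : ‖conj a / ‖a‖ * b‖ ≤ ‖b‖ := by
  rcases eq_or_ne a 0 with rfl | ha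
  · simp
  · simp [norm_ne_zero_iff.2 ha]

theorem conj_div_norm_mul_mul_norm (a b : ℂ) : conj a / ‖a‖ * b * ‖a‖ = conj a * b := by
  rcases eq_or_ne a 0 with rfl | ha
  · simp
  · field_simp [ofReal_ne_zero.2 (norm_ne_zero_iff.2 ha)]

end Complex

theorem ae_eq_ofReal_of_norm_le_of_integral_le_re {X : Type*} [MeasurableSpace X] {μ : Measure X}
    {f : X → ℂ} {g : X → ℝ} (hf : AEStronglyMeasurable f μ) (hg : Integrable g μ)
    (hle : ∀ᵐ x ∂μ, ‖f x‖ ≤ g x) (hint : ∫ x, g x ∂μ ≤ (∫ x, f x ∂μ).re) :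
    f =ᵐ[μ] fun x => (g x : ℂ) := by
  have hfi : Integrable f μ := hg.mono' hf hle
  have hfre : Integrable (fun x => (f x).re) μ := hfi.re
  have hint_re : ∫ x, (f x).re ∂μ = (∫ x, f x ∂μ).re := integral_re hfi
  have hre_le : ∀ᵐ x ∂μ, (f x).re ≤ g x := hle.mono fun x hx => (re_le_norm _).trans hx
  have hgap : (fun x => g x - (f x).re) =ᵐ[μ] 0 := by
    refine (integral_eq_zero_iff_of_nonneg_ae (hre_le.mono fun x hx => sub_nonneg.2 hx)
      (hg.sub hfre)).1 ?_
    rw [integral_sub hg hfre, hint_re]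
    exact le_antisymm (sub_nonpos.2 hint) (hint_re ▸ sub_nonneg.2 (integral_mono_ae hfre hg hre_le))
  filter_upwards [hle, hgap] with x hx hgx
  exact eq_ofReal_of_norm_le_of_le_re hx (sub_eq_zero.1 hgx).le

theorem AnalyticOnNhd.exists_eqOn_const_of_im_eq_zero {E : Type*} [NormedAddCommGroup E]
    [NormedSpace ℂ E] {U : Set E} {g : E → ℂ} (hg : AnalyticOnNhd ℂ g U) (hU : IsOpen U)
    (hUc : IsPreconnected U) (him : ∀ z ∈ U, (g z).im = 0) : ∃ w, ∀ z ∈ U, g z = w := by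
  rcases U.eq_empty_or_nonempty with rfl | ⟨z, hz⟩
  · exact ⟨0, by simp⟩
  refine (hg.is_constant_or_isOpen hUc).resolve_right fun hopen => ?_
  have himage : g '' U ⊆ interior (im ⁻¹' {0}) :=
    (hopen U subset_rfl hU).subset_interior_iff.2 (by rintro _ ⟨z, hz, rfl⟩; exact him z hz)
  rw [interior_preimage_im, interior_singleton] at himage
  exact himage ⟨z, hz, rfl⟩

theorem AnalyticOnNhd.exists_real_eqOn_mul_of_im_conj_mul_eq_zero {E : Type*}
    [NormedAddCommGroup E] [NormedSpace ℂ E] {U : Set E} (hU : IsOpen U) (hUc : IsPreconnected U)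
    {α β : E → ℂ} (hα : AnalyticOnNhd ℂ α U) (hβ : AnalyticOnNhd ℂ β U) {z₀ : E} (hz₀ : z₀ ∈ U)
    (hαz₀ : α z₀ ≠ 0) (him : ∀ z ∈ U, (conj (α z) * β z).im = 0) :
    ∃ c : ℝ, Set.EqOn β (fun z => c * α z) U := by
  obtain ⟨r, hr, hball⟩ : ∃ r > 0, Metric.ball z₀ r ⊆ U ∩ α ⁻¹' {0}ᶜ :=
    Metric.isOpen_iff.1 (hα.continuousOn.isOpen_inter_preimage hU isOpen_compl_singleton) z₀
      ⟨hz₀, hαz₀⟩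
  have hquot : AnalyticOnNhd ℂ (fun z => β z / α z) (Metric.ball z₀ r) :=
    (hβ.mono fun z hz => (hball hz).1).div (hα.mono fun z hz => (hball hz).1)
      fun z hz => (hball hz).2
  obtain ⟨w, hw⟩ := hquot.exists_eqOn_const_of_im_eq_zero Metric.isOpen_ball
    (convex_ball z₀ r).isPreconnected
    fun z hz => (im_div_eq_zero_iff (hball hz).2).2 (him z (hball hz).1)
  have hw_real : (w.re : ℂ) = w := by
    rw [Complex.ext_iff, ofReal_re, ofReal_im, ← hw z₀ (Metric.mem_ball_self hr)]
    exact ⟨rfl, ((im_div_eq_zero_iff hαz₀).2 (him z₀ hz₀)).symm⟩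
  refine ⟨w.re, hβ.eqOn_of_preconnected_of_eventuallyEq (analyticOnNhd_const.mul hα) hUc hz₀ ?_⟩
  filter_upwards [Metric.ball_mem_nhds z₀ hr] with z hz
  rw [hw_real, ← hw z hz, div_mul_cancel₀ _ (hball hz).2]

theorem L1_duality_equality_case_general (U : Set ℂ) (hU : IsOpen U)
    (hconn : IsPreconnected U) (α β : ℂ → ℂ)
    (hα : DifferentiableOn ℂ α U) (hβ : DifferentiableOn ℂ β U)
    (hα0 : ∃ z ∈ U, α z ≠ 0)
    (hnβ : ∫ z in U, ‖β z‖ = 1)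
    (hre : (∫ z in U, ((starRingEnd ℂ) (α z) / (‖α z‖ : ℂ)) * β z).re = 1) :
    ∃ t : ℝ, t ≠ 0 ∧ Set.EqOn α (fun z => (t : ℂ) * β z) U := by
  obtain ⟨z₀, hz₀, hαz₀⟩ := hα0
  have hβint : Integrable (fun z => ‖β z‖) (volume.restrict U) :=
    Integrable.of_integral_ne_zero (hnβ ▸ one_ne_zero)
  have hαm : AEMeasurable α (volume.restrict U) := hα.continuousOn.aemeasurable hU.measurableSet
  have hβm : AEMeasurable β (volume.restrict U) := hβ.continuousOn.aemeasurable hU.measurableSet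
  have hf_ae : (fun z => conj (α z) / ‖α z‖ * β z) =ᵐ[volume.restrict U] fun z => (‖β z‖ : ℂ) :=
    ae_eq_ofReal_of_norm_le_of_integral_le_re
      (by fun_prop : AEMeasurable _ _).aestronglyMeasurable hβint
      (ae_of_all _ fun z => norm_conj_div_norm_mul_le _ _) (hnβ.trans hre.symm).le
  have him : ∀ z ∈ U, (conj (α z) * β z).im = 0 := by
    refine volume.eqOn_open_of_ae_eq (g := 0) ?_ hU (continuous_im.comp_continuousOn
      ((continuous_conj.comp_continuousOn hα.continuousOn).mul hβ.continuousOn)) continuousOn_const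
    filter_upwards [hf_ae] with z hz
    rw [← conj_div_norm_mul_mul_norm, hz, Pi.zero_apply, ← ofReal_mul, ofReal_im]
  obtain ⟨c, hc⟩ := (hα.analyticOnNhd hU).exists_real_eqOn_mul_of_im_conj_mul_eq_zero hU hconn
    (hβ.analyticOnNhd hU) hz₀ hαz₀ him
  have hc0 : c ≠ 0 := by
    rintro rfl
    have : ∫ z in U, ‖β z‖ = 0 := setIntegral_eq_zero_of_forall_eq_zero fun z hz => by simp [hc hz]
    exact one_ne_zero (hnβ.symm.trans this)
  exact ⟨c⁻¹, inv_ne_zero hc0, fun z hz => by simp [hc hz, hc0]⟩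

/-- **Equality case in the L¹-duality for holomorphic quadratic differentials** (in a
coordinate chart).  Let `U ⊆ ℂ` be a nonempty connected open set, `α, β` holomorphic on
`U`, `α` not identically zero on `U`, and `∫_U |β| dA = 1`.  If
`Re ∫_U (conj α / |α|) · β dA = 1`, then `α = t · β` on `U` for some real `t ≠ 0`.
(The integrand `conj α / |α| · β` takes the junk value `0` on the measure-zero zero set
of `α`, matching the convention that it is defined off that set.) -/
theorem L1_duality_equality_case (U : Set ℂ) (hU : IsOpen U)
    (hne : U.Nonempty) (hconn : IsPreconnected U) (α β : ℂ → ℂ)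
    (hα : DifferentiableOn ℂ α U) (hβ : DifferentiableOn ℂ β U)
    (hα0 : ∃ z ∈ U, α z ≠ 0)
    (hnβ : ∫ z in U, ‖β z‖ = 1)
    (hre : (∫ z in U, ((starRingEnd ℂ) (α z) / (‖α z‖ : ℂ)) * β z).re = 1) :
    ∃ t : ℝ, t ≠ 0 ∧ Set.EqOn α (fun z => (t : ℂ) * β z) U :=
  L1_duality_equality_case_general U hU hconn α β hα hβ hα0 hnβ hre
end

section
/- Let W ⊆ ℂ be a connected open set, q₀ : W → ℂ holomorphic and not identically zero, φ : W → ℂ a C^∞ function, and K ⊆ W compact. Then the function f : ℂ → ℝ defined by f(t) = ∫_K |q₀(z) + t·φ(z)| dA(z) is real-differentiable at t = 0 and satisfies f(t) = f(0) + (t/2)·∫_K (conj(q₀)/|q₀|)·φ dA + (conj(t)/2)·∫_K (q₀/|q₀|)·conj(φ) dA + o(|t|) as t → 0 (the integrands are defined off the measure-zero zero set of q₀ and bounded by |φ|, hence integrable on K); equivalently, f(t) = f(0) + Re(t·∫_K (conj(q₀)/|q₀|)·φ dA) + o(|t|). -/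
/-!
Pointwise, `‖a + w‖ - ‖a‖ - Re (conj a / ‖a‖ * w)` is at most `2‖w‖` in absolute value, and at
most `‖w‖² / (2‖a‖)` when `a ≠ 0`. With `w = t φ` and after dividing by `‖t‖`, the error
integrands are dominated by `2‖φ‖` and tend to `0` wherever `q₀ ≠ 0`, which is almost everywhere
on `K` because an analytic function that does not vanish identically on a connected open set has
only finitely many zeros in a compact subset. Dominated convergence gives the `o(‖t‖)` estimate,
and the complex form is its real part written as `(t c + conj (t c)) / 2`.
-/

open MeasureTheory Complex Filter Asymptotics Topology ComplexConjugate

lemma add_le_and_le_add_sq_div_of_sq_eq {x r y s : ℝ} (hx : 0 < x) (hr : |r| ≤ y) (hs : 0 ≤ s)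
    (h : s ^ 2 = x ^ 2 + 2 * r * x + y ^ 2) : x + r ≤ s ∧ s ≤ x + r + y ^ 2 / (2 * x) := by
  obtain ⟨hr₁, hr₂⟩ := abs_le.mp hr
  refine ⟨by nlinarith, ?_⟩
  set d := y ^ 2 / (2 * x)
  have hd : d * (2 * x) = y ^ 2 := div_mul_cancel₀ _ (by positivity)
  have hB : 0 ≤ x + r + d := by nlinarith [sq_nonneg (x - y)]
  have hsq : s ^ 2 ≤ (x + r + d) ^ 2 := by nlinarith [sq_nonneg (r + d)]
  exact (pow_le_pow_iff_left₀ hs hB two_ne_zero).mp hsq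

namespace Complex

lemma norm_conj_div_norm_le_one (a : ℂ) : ‖conj a / ‖a‖‖ ≤ 1 := by
  rw [norm_div, norm_conj, norm_real, norm_norm]
  exact div_self_le_one _

lemma abs_re_conj_div_norm_mul_le (a w : ℂ) : |(conj a / ‖a‖ * w).re| ≤ ‖w‖ :=
  (abs_re_le_norm _).trans <| by
    rw [norm_mul]; exact mul_le_of_le_one_left (norm_nonneg w) (norm_conj_div_norm_le_one a)

lemma sq_norm_add_eq (a w : ℂ) (ha : a ≠ 0) :
    ‖a + w‖ ^ 2 = ‖a‖ ^ 2 + 2 * (conj a / ‖a‖ * w).re * ‖a‖ + ‖w‖ ^ 2 := by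
  have hre : (conj a / ‖a‖ * w).re * ‖a‖ = (w * conj a).re := by
    rw [div_mul_eq_mul_div, mul_comm (conj a), div_ofReal_re,
      div_mul_cancel₀ _ (norm_ne_zero_iff.mpr ha)]
  rw [norm_add_sq_real, Complex.inner, mul_assoc, hre]

lemma abs_norm_add_sub_norm_sub_re_le (a w : ℂ) :
    |‖a + w‖ - ‖a‖ - (conj a / ‖a‖ * w).re| ≤ 2 * ‖w‖ := by
  have h₁ : |‖a + w‖ - ‖a‖| ≤ ‖w‖ := by simpa using abs_norm_sub_norm_le (a + w) a
  linarith [abs_sub (‖a + w‖ - ‖a‖) (conj a / ‖a‖ * w).re, abs_re_conj_div_norm_mul_le a w]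

lemma abs_norm_add_sub_norm_sub_re_le_sq_div (a w : ℂ) (ha : a ≠ 0) :
    |‖a + w‖ - ‖a‖ - (conj a / ‖a‖ * w).re| ≤ ‖w‖ ^ 2 / (2 * ‖a‖) := by
  obtain ⟨hlow, hup⟩ := add_le_and_le_add_sq_div_of_sq_eq (norm_pos_iff.mpr ha)
    (abs_re_conj_div_norm_mul_le a w) (norm_nonneg _) (sq_norm_add_eq a w ha)
  have : 0 ≤ ‖w‖ ^ 2 / (2 * ‖a‖) := by positivity
  exact abs_le.mpr ⟨by linarith, by linarith⟩

lemma ofReal_re_mul (t c : ℂ) : (((t * c).re : ℝ) : ℂ) = t / 2 * c + conj t / 2 * conj c := by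
  rw [re_eq_add_conj, map_mul]; ring

end Complex

theorem AnalyticOnNhd.finite_inter_setOf_eq_zero {𝕜 E : Type*} [NontriviallyNormedField 𝕜]
    [NormedAddCommGroup E] [NormedSpace 𝕜 E] {f : 𝕜 → E} {U K : Set 𝕜}
    (hf : AnalyticOnNhd 𝕜 f U) (hU : IsPreconnected U) (hne : ∃ z ∈ U, f z ≠ 0)
    (hK : IsCompact K) (hKU : K ⊆ U) : (K ∩ {z | f z = 0}).Finite := by
  obtain ⟨z, hzU, hz⟩ := hne
  have hcodiscrete := ((hf.eqOn_zero_or_eventually_ne_zero_of_preconnected hU).resolve_left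
    fun h => hz (h hzU)).filter_mono (codiscreteWithin_mono hKU)
  simpa [Set.sdiff_eq, Set.compl_ofPred] using hK.finite_sdiff_of_mem_codiscreteWithin hcodiscrete

section IntegralNorm

variable {α : Type*} [MeasurableSpace α] {μ : Measure α} {a g : α → ℂ}

lemma integrable_conj_div_norm_mul (ha : AEStronglyMeasurable a μ) (hg : Integrable g μ) :
    Integrable (fun z => conj (a z) / ‖a z‖ * g z) μ := by
  have hsgn : Measurable fun w : ℂ => conj w / (‖w‖ : ℂ) := by fun_prop
  refine hg.mono ((hsgn.comp_aemeasurable ha.aemeasurable).aestronglyMeasurable.mul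
    hg.aestronglyMeasurable) (.of_forall fun z => ?_)
  rw [norm_mul]
  exact mul_le_of_le_one_left (norm_nonneg _) (norm_conj_div_norm_le_one _)

lemma integral_norm_add_mul_sub_eq_integral (ha : Integrable a μ) (hg : Integrable g μ) (t : ℂ) :
    (∫ z, ‖a z + t * g z‖ ∂μ) - ((∫ z, ‖a z‖ ∂μ) + (t * ∫ z, conj (a z) / ‖a z‖ * g z ∂μ).re)
      = ∫ z, (‖a z + t * g z‖ - ‖a z‖ - (conj (a z) / ‖a z‖ * (t * g z)).re) ∂μ := by
  have hat : Integrable (fun z => ‖a z + t * g z‖) μ := (ha.add (hg.const_mul t)).norm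
  have hc := integrable_conj_div_norm_mul ha.aestronglyMeasurable (hg.const_mul t)
  have hre : ∫ z, (conj (a z) / ‖a z‖ * (t * g z)).re ∂μ
      = (∫ z, conj (a z) / ‖a z‖ * (t * g z) ∂μ).re := integral_re hc
  rw [integral_sub (f := fun z => ‖a z + t * g z‖ - ‖a z‖)
      (g := fun z => (conj (a z) / ‖a z‖ * (t * g z)).re) (hat.sub ha.norm) hc.re,
    integral_sub hat ha.norm, hre, ← integral_const_mul]
  simp only [mul_left_comm t]
  ring

theorem isLittleO_integral_norm_add_mul (ha : Integrable a μ) (hg : Integrable g μ)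
    (ha₀ : ∀ᵐ z ∂μ, a z ≠ 0) :
    (fun t : ℂ => (∫ z, ‖a z + t * g z‖ ∂μ) -
        ((∫ z, ‖a z‖ ∂μ) + (t * ∫ z, conj (a z) / ‖a z‖ * g z ∂μ).re))
      =o[𝓝 0] fun t => ‖t‖ := by
  set e : ℂ → α → ℝ := fun t z => ‖a z + t * g z‖ - ‖a z‖ - (conj (a z) / ‖a z‖ * (t * g z)).re
  simp only [integral_norm_add_mul_sub_eq_integral ha hg]
  refine (isLittleO_iff_tendsto' (.of_forall fun t ht => ?_)).mpr ?_
  · simp [norm_eq_zero.mp ht]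
  have hint : ∀ t, Integrable (e t) μ := fun t =>
    ((ha.add (hg.const_mul t)).norm.sub ha.norm).sub
      (integrable_conj_div_norm_mul ha.aestronglyMeasurable (hg.const_mul t)).re
  simp only [← integral_div]
  rw [← integral_zero α ℝ]
  refine tendsto_integral_filter_of_dominated_convergence (fun z => 2 * ‖g z‖)
    (.of_forall fun t => ((hint t).div_const _).aestronglyMeasurable)
    (.of_forall fun t => .of_forall fun z => ?_) (hg.norm.const_mul 2) ?_
  · rw [norm_div, norm_norm, Real.norm_eq_abs]
    refine div_le_of_le_mul₀ (norm_nonneg t) (by positivity) ?_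
    calc |e t z| ≤ 2 * ‖t * g z‖ := abs_norm_add_sub_norm_sub_re_le _ _
      _ = 2 * ‖g z‖ * ‖t‖ := by rw [norm_mul]; ring
  · filter_upwards [ha₀] with z hz
    have hlim : Tendsto (fun t : ℂ => ‖t‖ * (‖g z‖ ^ 2 / (2 * ‖a z‖))) (𝓝 0) (𝓝 0) := by
      simpa using (continuous_norm.tendsto (0 : ℂ)).mul_const (‖g z‖ ^ 2 / (2 * ‖a z‖))
    refine squeeze_zero_norm (fun t => ?_) hlim
    rw [norm_div, norm_norm, Real.norm_eq_abs]
    refine div_le_of_le_mul₀ (norm_nonneg t) (by positivity) ?_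
    calc |e t z| ≤ ‖t * g z‖ ^ 2 / (2 * ‖a z‖) := abs_norm_add_sub_norm_sub_re_le_sq_div _ _ hz
      _ = ‖t‖ * (‖g z‖ ^ 2 / (2 * ‖a z‖)) * ‖t‖ := by rw [norm_mul]; ring

theorem hasFDerivAt_integral_norm_add_mul (ha : Integrable a μ) (hg : Integrable g μ)
    (ha₀ : ∀ᵐ z ∂μ, a z ≠ 0) :
    HasFDerivAt (fun t : ℂ => ∫ z, ‖a z + t * g z‖ ∂μ)
      (reCLM ∘L ContinuousLinearMap.mul ℝ ℂ (∫ z, conj (a z) / ‖a z‖ * g z ∂μ)) 0 := by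
  rw [hasFDerivAt_iff_isLittleO_nhds_zero, ← isLittleO_norm_right]
  refine (isLittleO_integral_norm_add_mul ha hg ha₀).congr_left fun t => ?_
  simp only [zero_add, zero_mul, add_zero, ContinuousLinearMap.comp_apply,
    ContinuousLinearMap.mul_apply', reCLM_apply, mul_comm _ t]
  ring

end IntegralNorm

/-- **Royden's variational lemma for the L¹-norm** (in a coordinate chart).  Let `W ⊆ ℂ`
be a connected open set, `q₀` holomorphic on `W` and not identically zero, `φ` a `C^∞`
function on `W`, and `K ⊆ W` compact.  Then `f(t) = ∫_K |q₀ + t·φ| dA` is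
real-differentiable at `t = 0` and
`f(t) = f(0) + (t/2)·∫_K (conj q₀/|q₀|)·φ + (conj t/2)·∫_K (q₀/|q₀|)·conj φ + o(|t|)`;
equivalently `f(t) = f(0) + Re (t·∫_K (conj q₀/|q₀|)·φ) + o(|t|)`. -/
theorem royden_variational_lemma (W : Set ℂ) (hW : IsOpen W) (hconn : IsPreconnected W)
    (q₀ φ : ℂ → ℂ) (hq : DifferentiableOn ℂ q₀ W) (hq0 : ∃ z ∈ W, q₀ z ≠ 0)
    (hφ : ContDiffOn ℝ (⊤ : ℕ∞) φ W) (K : Set ℂ) (hK : IsCompact K) (hKW : K ⊆ W) :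
    DifferentiableAt ℝ (fun t : ℂ => ∫ z in K, ‖q₀ z + t * φ z‖) 0 ∧
    (fun t : ℂ =>
        ((∫ z in K, ‖q₀ z + t * φ z‖) : ℂ) -
          (((∫ z in K, ‖q₀ z‖) : ℂ)
            + (t / 2) *
                (∫ z in K, ((starRingEnd ℂ) (q₀ z) / (‖q₀ z‖ : ℂ)) * φ z)
            + ((starRingEnd ℂ) t / 2) *
                (∫ z in K, (q₀ z / (‖q₀ z‖ : ℂ)) * (starRingEnd ℂ) (φ z))))
      =o[𝓝 0] (fun t : ℂ => ‖t‖) ∧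
    (fun t : ℂ =>
        (∫ z in K, ‖q₀ z + t * φ z‖) -
          ((∫ z in K, ‖q₀ z‖)
            + (t * ∫ z in K,
                ((starRingEnd ℂ) (q₀ z) / (‖q₀ z‖ : ℂ)) * φ z).re))
      =o[𝓝 0] (fun t : ℂ => ‖t‖) := by
  have hq_int : Integrable q₀ (volume.restrict K) :=
    (hq.continuousOn.mono hKW).integrableOn_compact hK
  have hφ_int : Integrable φ (volume.restrict K) :=
    (hφ.continuousOn.mono hKW).integrableOn_compact hK
  have hne : ∀ᵐ z ∂volume.restrict K, q₀ z ≠ 0 := by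
    rw [ae_iff, Measure.restrict_apply' hK.measurableSet]
    simpa [Set.inter_comm] using
      ((hq.analyticOnNhd hW).finite_inter_setOf_eq_zero hconn hq0 hK hKW).measure_zero volume
  have hre := isLittleO_integral_norm_add_mul hq_int hφ_int hne
  refine ⟨(hasFDerivAt_integral_norm_add_mul hq_int hφ_int hne).differentiableAt,
    ((ofRealCLM.isBigO_comp _ _).trans_isLittleO hre).congr_left fun t => ?_, hre⟩
  have hconj : (∫ z in K, q₀ z / ‖q₀ z‖ * conj (φ z))
      = conj (∫ z in K, conj (q₀ z) / ‖q₀ z‖ * φ z) := by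
    rw [← integral_conj]; simp
  simp only [ofRealCLM_apply, ofReal_sub, ofReal_add, ofReal_re_mul, integral_complex_ofReal,
    hconj]
  ring
end

section
/- Let U ⊆ ℂ^m be open and G : U × ℂⁿ → ℝ continuous such that for every x ∈ U the function G(x,·) is positive, convex, complex homogeneous, and strictly convex; let F be the dual metric. For (x, ξ) ∈ U × (ℂⁿ∖{0}) let η_{x,ξ} denote the unique vector with G(x, η_{x,ξ}) = 1 and F(x, ξ) = Re(η_{x,ξ}(ξ)). Then the map (x, ξ) ↦ η_{x,ξ} is continuous on U × (ℂⁿ∖{0}). -/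
open Complex Filter Asymptotics Topology

/-!
Since each `G (x, ·)` is positive, homogeneous and continuous, on a compact set of parameters it
dominates a fixed multiple of the norm; hence near `(x₀, ξ₀)` the functionals `η (x, ξ)` stay in a
fixed compact ball, and it suffices to show that each of their cluster points `v` equals
`η (x₀, ξ₀)`. Passing to the limit along an ultrafilter, `G (x₀, v) = 1`, and the Hölder inequality
`Re w(ξ) ≤ G (x, w) · Re η (x, ξ)(ξ)` for a maximizer gives `Re w(ξ₀) ≤ Re v(ξ₀)` whenever
`G (x₀, w) = 1`. So `v` is again a maximizer, and maximizers are unique by strict convexity.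
-/

/-- `η` maximizes `w ↦ Re w(ξ)` on the unit sphere `{w | g w = 1}`; unlike
`dualNorm g ξ = (cpair η ξ).re`, this does not rely on `sSup` of a possibly unbounded set. -/
def IsSupportingFunctional {n : ℕ} (g : (Fin n → ℂ) → ℝ) (ξ η : Fin n → ℂ) : Prop :=
  g η = 1 ∧ ∀ w, g w = 1 → (cpair w ξ).re ≤ (cpair η ξ).re

section

variable {n : ℕ} {g : (Fin n → ℂ) → ℝ}

theorem cpair_eq_dotProduct (η ξ : Fin n → ℂ) : cpair η ξ = η ⬝ᵥ ξ := rfl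

theorem continuous_cpair : Continuous fun p : (Fin n → ℂ) × (Fin n → ℂ) => cpair p.1 p.2 := by
  unfold cpair
  fun_prop

namespace IsComplexHomogeneous

theorem map_zero_s19 (h : IsComplexHomogeneous g) : g 0 = 0 := by
  simpa using h 0 0

theorem apply_eq_norm_mul (h : IsComplexHomogeneous g) (w : Fin n → ℂ) :
    g w = ‖w‖ * g ((‖w‖⁻¹ : ℂ) • w) := by
  rcases eq_or_ne w 0 with rfl | hw
  · simp [h.map_zero_s19]
  · conv_lhs => rw [← smul_inv_smul₀ (ofReal_ne_zero.2 (norm_ne_zero_iff.2 hw)) w]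
    rw [h, norm_real, norm_norm]

theorem apply_inv_smul_self (h : IsComplexHomogeneous g) {w : Fin n → ℂ} (hw : 0 < g w) :
    g ((((g w)⁻¹ : ℝ) : ℂ) • w) = 1 := by
  rw [h, norm_real, Real.norm_of_nonneg (inv_nonneg.2 hw.le), inv_mul_cancel₀ hw.ne']

end IsComplexHomogeneous

theorem exists_pos_mul_norm_le {X : Type*} [TopologicalSpace X] {G : X × (Fin n → ℂ) → ℝ}
    {K : Set X} (hK : IsCompact K) (hG : ContinuousOn G (K ×ˢ Set.univ))
    (hpos : ∀ x ∈ K, IsPositiveFn fun w => G (x, w))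
    (hhom : ∀ x ∈ K, IsComplexHomogeneous fun w => G (x, w)) :
    ∃ c > 0, ∀ x ∈ K, ∀ w, c * ‖w‖ ≤ G (x, w) := by
  obtain ⟨c, hc, hcG⟩ := (hK.prod (isCompact_sphere (0 : Fin n → ℂ) 1)).exists_forall_le'
    (hG.mono (Set.prod_mono_right (Set.subset_univ _))) (a := 0)
    fun p hp => hpos p.1 hp.1 p.2 (ne_zero_of_mem_unit_sphere ⟨p.2, hp.2⟩)
  refine ⟨c, hc, fun x hx w => ?_⟩
  rcases eq_or_ne w 0 with rfl | hw
  · simp [(hhom x hx).map_zero_s19]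
  rw [(hhom x hx).apply_eq_norm_mul w, mul_comm c]
  exact mul_le_mul_of_nonneg_left
    (hcG (x, _) ⟨hx, mem_sphere_zero_iff_norm.2 (norm_smul_inv_norm (𝕜 := ℂ) hw)⟩)
    (norm_nonneg w)

theorem norm_le_inv_of_mul_norm_le {c : ℝ} (hc : 0 < c) (hg : ∀ w, c * ‖w‖ ≤ g w)
    {w : Fin n → ℂ} (hw : g w = 1) : ‖w‖ ≤ c⁻¹ := by
  rw [← mul_one c⁻¹, le_inv_mul_iff₀ hc, ← hw]
  exact hg w

theorem isSupportingFunctional_of_dualNorm_eq {c : ℝ} (hc : 0 < c)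
    (hg : ∀ w, c * ‖w‖ ≤ g w) {ξ η : Fin n → ℂ} (h1 : g η = 1)
    (hF : dualNorm g ξ = (cpair η ξ).re) : IsSupportingFunctional g ξ η := by
  have hbdd : BddAbove {r : ℝ | ∃ w, g w = 1 ∧ r = (cpair w ξ).re} := by
    refine ((isCompact_closedBall (0 : Fin n → ℂ) c⁻¹).bddAbove_image
      (f := fun w => (cpair w ξ).re)
      (continuous_re.comp (continuous_cpair.comp
        (.prodMk continuous_id continuous_const))).continuousOn).mono ?_
    rintro _ ⟨w, hw, rfl⟩
    exact ⟨w, mem_closedBall_zero_iff.2 (norm_le_inv_of_mul_norm_le hc hg hw), rfl⟩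
  exact ⟨h1, fun w hw => hF ▸ le_csSup hbdd ⟨w, hw, rfl⟩⟩

namespace IsSupportingFunctional

variable {ξ η : Fin n → ℂ}

theorem re_cpair_le_mul (hpos : IsPositiveFn g) (hhom : IsComplexHomogeneous g)
    (h : IsSupportingFunctional g ξ η) (w : Fin n → ℂ) :
    (cpair w ξ).re ≤ g w * (cpair η ξ).re := by
  rcases eq_or_ne w 0 with rfl | hw
  · simp [cpair, hhom.map_zero_s19]
  have hgw := hpos w hw
  have := h.2 _ (hhom.apply_inv_smul_self hgw)
  rwa [cpair_eq_dotProduct, smul_dotProduct, smul_eq_mul, re_ofReal_mul,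
    inv_mul_le_iff₀ hgw] at this

open scoped ComplexOrder in
theorem re_cpair_pos (hpos : IsPositiveFn g) (hhom : IsComplexHomogeneous g) (hξ : ξ ≠ 0)
    (h : IsSupportingFunctional g ξ η) : 0 < (cpair η ξ).re := by
  have hstar : 0 < (cpair (star ξ) ξ).re :=
    (Complex.pos_iff.1 (Matrix.dotProduct_star_self_pos_iff.2 hξ)).1
  exact pos_of_mul_pos_right (hstar.trans_le (h.re_cpair_le_mul hpos hhom (star ξ)))
    (hpos _ (star_ne_zero.2 hξ)).le

theorem unique (hpos : IsPositiveFn g) (hhom : IsComplexHomogeneous g)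
    (hsc : IsStrictlyConvexFn g) (hξ : ξ ≠ 0) {η₁ η₂ : Fin n → ℂ}
    (h₁ : IsSupportingFunctional g ξ η₁) (h₂ : IsSupportingFunctional g ξ η₂) : η₁ = η₂ := by
  by_contra hne
  have heq : (cpair η₁ ξ).re = (cpair η₂ ξ).re := le_antisymm (h₂.2 _ h₁.1) (h₁.2 _ h₂.1)
  -- With `F = Re η₁(ξ) = Re η₂(ξ) > 0`, Hölder for `η₁ + η₂` gives `2F ≤ g (η₁ + η₂) F < 2F`.
  have hF := h₁.re_cpair_pos hpos hhom hξ
  have hsum := h₁.re_cpair_le_mul hpos hhom (η₁ + η₂)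
  simp only [cpair_eq_dotProduct, add_dotProduct, add_re] at hsum heq hF
  nlinarith [hsc.2 η₁ η₂ h₁.1 h₂.1 hne]

theorem of_tendsto {X : Type*} [TopologicalSpace X] {G : X × (Fin n → ℂ) → ℝ}
    {η : X × (Fin n → ℂ) → Fin n → ℂ} {l : Filter (X × (Fin n → ℂ))} [l.NeBot]
    {p₀ : X × (Fin n → ℂ)} {v : Fin n → ℂ} (hG : ∀ w, ContinuousAt G (p₀.1, w))
    (hpos : ∀ᶠ p in l, IsPositiveFn fun w => G (p.1, w))
    (hhom : ∀ᶠ p in l, IsComplexHomogeneous fun w => G (p.1, w))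
    (hsupp : ∀ᶠ p in l, IsSupportingFunctional (fun w => G (p.1, w)) p.2 (η p))
    (hl : l ≤ 𝓝 p₀) (hη : Tendsto η l (𝓝 v)) :
    IsSupportingFunctional (fun w => G (p₀.1, w)) p₀.2 v := by
  have hx : Tendsto Prod.fst l (𝓝 p₀.1) := (continuous_fst.tendsto p₀).mono_left hl
  have hξ : Tendsto Prod.snd l (𝓝 p₀.2) := (continuous_snd.tendsto p₀).mono_left hl
  have hre : ∀ {f : X × (Fin n → ℂ) → Fin n → ℂ} {w}, Tendsto f l (𝓝 w) →
      Tendsto (fun p => (cpair (f p) p.2).re) l (𝓝 (cpair w p₀.2).re) := fun hf =>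
    (continuous_re.comp continuous_cpair).continuousAt.tendsto.comp (hf.prodMk_nhds hξ)
  have hv : G (p₀.1, v) = 1 :=
    tendsto_nhds_unique ((hG v).tendsto.comp (hx.prodMk_nhds hη))
      (tendsto_const_nhds.congr' (hsupp.mono fun p hp => hp.1.symm))
  refine ⟨hv, fun w hw => ?_⟩
  have hGw : Tendsto (fun p => G (p.1, w)) l (𝓝 1) :=
    hw ▸ (hG w).tendsto.comp (hx.prodMk_nhds tendsto_const_nhds)
  exact le_of_tendsto_of_tendsto (hre tendsto_const_nhds)
    (one_mul (cpair v p₀.2).re ▸ hGw.mul (hre hη))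
    ((hpos.and (hhom.and hsupp)).mono fun p ⟨hp, hh, hs⟩ => hs.re_cpair_le_mul hp hh w)

end IsSupportingFunctional

end

theorem royden_supporting_functional_continuous_general {m n : ℕ}
    (U : Set (Fin m → ℂ)) (hU : IsOpen U)
    (G : (Fin m → ℂ) × (Fin n → ℂ) → ℝ)
    (hGcont : ContinuousOn G (U ×ˢ (Set.univ : Set (Fin n → ℂ))))
    (hGpos : ∀ x ∈ U, IsPositiveFn fun η => G (x, η))
    (hGhom : ∀ x ∈ U, IsComplexHomogeneous fun η => G (x, η))
    (hGsc : ∀ x ∈ U, IsStrictlyConvexFn fun η => G (x, η))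
    (η : (Fin m → ℂ) × (Fin n → ℂ) → (Fin n → ℂ))
    (hη : ∀ p ∈ U ×ˢ {ξ : Fin n → ℂ | ξ ≠ 0},
      G (p.1, η p) = 1 ∧ dualMetric G p.1 p.2 = (cpair (η p) p.2).re) :
    ContinuousOn η (U ×ˢ {ξ : Fin n → ℂ | ξ ≠ 0}) := by
  have hbound {K : Set (Fin m → ℂ)} (hK : IsCompact K) (hKU : K ⊆ U) :=
    exists_pos_mul_norm_le hK (hGcont.mono (Set.prod_mono hKU subset_rfl))
      (fun x hx => hGpos x (hKU hx)) fun x hx => hGhom x (hKU hx)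
  have hsupp : ∀ p ∈ U ×ˢ {ξ : Fin n → ℂ | ξ ≠ 0},
      IsSupportingFunctional (fun w => G (p.1, w)) p.2 (η p) := by
    intro p hp
    obtain ⟨c, hc, hcG⟩ := hbound isCompact_singleton (Set.singleton_subset_iff.2 hp.1)
    exact isSupportingFunctional_of_dualNorm_eq hc (hcG p.1 rfl) (hη p hp).1 (hη p hp).2
  intro p₀ hp₀
  obtain ⟨K, hK, hKU, hKc⟩ := local_compact_nhds (hU.mem_nhds hp₀.1)
  obtain ⟨c, hc, hcG⟩ := hbound hKc hKU
  have hnear : ∀ᶠ p in 𝓝[U ×ˢ {ξ | ξ ≠ 0}] p₀, η p ∈ Metric.closedBall 0 c⁻¹ := by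
    filter_upwards [self_mem_nhdsWithin, nhdsWithin_le_nhds ((continuous_fst.tendsto p₀) hK)]
      with p hp hpK
    exact mem_closedBall_zero_iff.2 (norm_le_inv_of_mul_norm_le hc (hcG p.1 hpK) (hη p hp).1)
  refine (isCompact_closedBall _ _).tendsto_nhds_of_unique_mapClusterPt hnear fun v _ hv => ?_
  obtain ⟨l, hl, hlv⟩ := mapClusterPt_iff_ultrafilter.1 hv
  have hlS : ∀ᶠ p in (l : Filter _), p ∈ U ×ˢ {ξ : Fin n → ℂ | ξ ≠ 0} := hl self_mem_nhdsWithin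
  have hGat (w : Fin n → ℂ) : ContinuousAt G (p₀.1, w) :=
    hGcont.continuousAt ((hU.prod isOpen_univ).mem_nhds ⟨hp₀.1, trivial⟩)
  have hv : IsSupportingFunctional (fun w => G (p₀.1, w)) p₀.2 v :=
    .of_tendsto hGat (hlS.mono fun p hp => hGpos _ hp.1) (hlS.mono fun p hp => hGhom _ hp.1)
      (hlS.mono hsupp) (hl.trans nhdsWithin_le_nhds) hlv
  exact hv.unique (hGpos _ hp₀.1) (hGhom _ hp₀.1) (hGsc _ hp₀.1) hp₀.2 (hsupp p₀ hp₀)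

/-- **Continuity of the supporting functional (established in the proof of Claim 3 of
Royden's criterion).**  If `G : U × ℂⁿ → ℝ` is continuous and each `G (x, ·)` is positive,
convex, complex homogeneous and strictly convex, then any selection
`(x, ξ) ↦ η_{x,ξ}` of the (unique) supporting functional, i.e. any map `η` with
`G (x, η (x, ξ)) = 1` and `F (x, ξ) = Re (η (x, ξ)(ξ))` on `U × (ℂⁿ ∖ {0})`, is
continuous on `U × (ℂⁿ ∖ {0})`. -/
theorem royden_supporting_functional_continuous {m n : ℕ}
    (U : Set (Fin m → ℂ)) (hU : IsOpen U)
    (G : (Fin m → ℂ) × (Fin n → ℂ) → ℝ)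
    (hGcont : ContinuousOn G (U ×ˢ (Set.univ : Set (Fin n → ℂ))))
    (hGpos : ∀ x ∈ U, IsPositiveFn fun η => G (x, η))
    (hGconv : ∀ x ∈ U, IsConvexFn fun η => G (x, η))
    (hGhom : ∀ x ∈ U, IsComplexHomogeneous fun η => G (x, η))
    (hGsc : ∀ x ∈ U, IsStrictlyConvexFn fun η => G (x, η))
    (η : (Fin m → ℂ) × (Fin n → ℂ) → (Fin n → ℂ))
    (hη : ∀ p ∈ U ×ˢ {ξ : Fin n → ℂ | ξ ≠ 0},
      G (p.1, η p) = 1 ∧ dualMetric G p.1 p.2 = (cpair (η p) p.2).re) :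
    ContinuousOn η (U ×ˢ {ξ : Fin n → ℂ | ξ ≠ 0}) :=
  royden_supporting_functional_continuous_general U hU G hGcont hGpos hGhom hGsc η hη
end
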